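/- Let p, q ∈ (1,∞), k > −1, n a nonnegative integer, and x ∈ [0, π_{p,q}/2]. Then ∫₀^x sin_{p,q}^k(t) · cos_{p,q}^{pn+1}(t) dt = ∑_{m=0}^n [(−1)^m/(k+1+qm)] · C(n,m) · sin_{p,q}^{k+1+qm}(x), where C(n,m) is the binomial coefficient. -/

import Mathlib

open Set MeasureTheory Filter

/-- Generalized arcsine: `arcsin_{p,q}(x) = ∫₀ˣ (1 - tᵠ)^(-1/p) dt`. -/
noncomputable def gArcsin (p q x : ℝ) : ℝ := ∫ t in (0:ℝ)..x, (1 - t ^ q) ^ (-(1 / p))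

/-- Generalized pi: `π_{p,q} = 2 ∫₀¹ (1 - tᵠ)^(-1/p) dt`. -/
noncomputable def gPi (p q : ℝ) : ℝ := 2 * gArcsin p q 1

/-- `S` is the generalized sine `sin_{p,q}` (the inverse of `gArcsin p q` on `[0,1]`). -/
def IsGSin (p q : ℝ) (S : ℝ → ℝ) : Prop :=
  ∀ y ∈ Icc (0:ℝ) 1, S (gArcsin p q y) = y

/-- `C` is the generalized cosine `cos_{p,q}`, the derivative of `S = sin_{p,q}`
on `[0, π_{p,q}/2]`. -/
def IsGCos (p q : ℝ) (S C : ℝ → ℝ) : Prop :=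
  ∀ x ∈ Icc (0:ℝ) (gPi p q / 2), HasDerivWithinAt S (C x) (Icc (0:ℝ) (gPi p q / 2)) x

/-! On `(0, π_{p,q}/2)` the chain rule applied to `arcsin_{p,q} ∘ sin_{p,q} = id` gives
`cos_{p,q} = (1 - sin_{p,q}^q)^{1/p}`, so the integrand is `s^k (1 - s^q)^n s'` with
`s = sin_{p,q}`. Expanding `(1 - s^q)^n` binomially and integrating term by term gives the
primitive `betaPrimitive q k n ∘ sin_{p,q}`, which is the right-hand side. Its derivative is
nonnegative, hence integrable even where `s^k` blows up at `0` (when `k < 0`), so the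
fundamental theorem of calculus applies on `[0, x]`. -/

open Topology

section GeneralizedArcsine

variable {p q : ℝ}

lemma intervalIntegrable_gArcsin_integrand (hp : 1 < p) (hq : 1 ≤ q) {y : ℝ}
    (hy : y ∈ Icc (0 : ℝ) 1) :
    IntervalIntegrable (fun t : ℝ => (1 - t ^ q) ^ (-(1 / p))) volume 0 y := by
  have hp_inv : 0 < 1 / p := by positivity
  have hexp : -1 < -(1 / p) := by
    have : 1 / p < 1 := (div_lt_one (by linarith)).2 hp
    linarith
  have hdom : IntervalIntegrable (fun t : ℝ => (1 - t) ^ (-(1 / p))) volume 0 1 := by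
    simpa using
      ((intervalIntegral.intervalIntegrable_rpow' (a := 0) (b := 1) hexp).comp_sub_left 1).symm
  have hmeas : Measurable fun t : ℝ => (1 - t ^ q) ^ (-(1 / p)) := by fun_prop
  refine (hdom.mono_fun hmeas.aestronglyMeasurable ?_).mono_set ?_
  · rw [EventuallyLE, ae_restrict_iff' measurableSet_uIoc, uIoc_of_le zero_le_one]
    filter_upwards with t ⟨ht0, ht1⟩
    rcases ht1.lt_or_eq with ht1 | rfl
    · have hpos : 0 < 1 - t := by linarith
      have hle : 1 - t ≤ 1 - t ^ q := by
        have := Real.rpow_le_rpow_of_exponent_ge ht0 ht1.le hq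
        rw [Real.rpow_one] at this
        linarith
      rw [Real.norm_of_nonneg (Real.rpow_nonneg (hpos.le.trans hle) _),
        Real.norm_of_nonneg (Real.rpow_nonneg hpos.le _)]
      exact Real.rpow_le_rpow_of_nonpos hpos hle (by linarith)
    · simp
  · rw [uIcc_of_le zero_le_one, uIcc_of_le hy.1]
    exact Icc_subset_Icc_right hy.2

lemma gArcsin_zero : gArcsin p q 0 = 0 := intervalIntegral.integral_same

lemma gArcsin_one : gArcsin p q 1 = gPi p q / 2 := by
  rw [gPi]; ring

lemma continuousOn_gArcsin (hp : 1 < p) (hq : 1 ≤ q) : ContinuousOn (gArcsin p q) (Icc 0 1) := by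
  have := intervalIntegral.continuousOn_primitive_interval'
    (intervalIntegrable_gArcsin_integrand hp hq (right_mem_Icc.2 zero_le_one)) left_mem_uIcc
  rwa [uIcc_of_le zero_le_one] at this

lemma hasDerivAt_gArcsin (hp : 1 < p) (hq : 1 ≤ q) {y : ℝ} (hy0 : 0 ≤ y) (hy1 : y < 1) :
    HasDerivAt (gArcsin p q) ((1 - y ^ q) ^ (-(1 / p))) y := by
  have hbase : 1 - y ^ q ≠ 0 := (sub_pos.2 (Real.rpow_lt_one hy0 hy1 (by linarith))).ne'
  refine intervalIntegral.integral_hasDerivAt_right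
    (intervalIntegrable_gArcsin_integrand hp hq ⟨hy0, hy1.le⟩)
    (StronglyMeasurable.stronglyMeasurableAtFilter (by fun_prop)) ?_
  exact (continuousAt_const.sub
    (Real.continuousAt_rpow_const _ _ (Or.inr (by linarith)))).rpow_const (Or.inl hbase)

lemma exists_gArcsin_eq (hp : 1 < p) (hq : 1 ≤ q) {x : ℝ} (hx : x ∈ Icc 0 (gPi p q / 2)) :
    ∃ y ∈ Icc (0 : ℝ) 1, gArcsin p q y = x :=
  intermediate_value_Icc zero_le_one (continuousOn_gArcsin hp hq)
    (by rwa [gArcsin_zero, gArcsin_one])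

end GeneralizedArcsine

namespace IsGSin

variable {p q : ℝ} {S : ℝ → ℝ}

lemma apply_zero (hS : IsGSin p q S) : S 0 = 0 := by
  simpa [gArcsin_zero] using hS 0 (left_mem_Icc.2 zero_le_one)

lemma mem_Icc_and_gArcsin_apply (hS : IsGSin p q S) (hp : 1 < p) (hq : 1 ≤ q) {x : ℝ}
    (hx : x ∈ Icc 0 (gPi p q / 2)) : S x ∈ Icc (0 : ℝ) 1 ∧ gArcsin p q (S x) = x := by
  obtain ⟨y, hy, rfl⟩ := exists_gArcsin_eq hp hq hx
  rw [hS y hy]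
  exact ⟨hy, rfl⟩

lemma mem_Ioo (hS : IsGSin p q S) (hp : 1 < p) (hq : 1 ≤ q) {x : ℝ}
    (hx : x ∈ Ioo 0 (gPi p q / 2)) : S x ∈ Ioo (0 : ℝ) 1 := by
  obtain ⟨⟨h0, h1⟩, hSx⟩ := hS.mem_Icc_and_gArcsin_apply hp hq (Ioo_subset_Icc_self hx)
  refine ⟨h0.lt_of_ne ?_, h1.lt_of_ne ?_⟩
  · rintro h
    rw [← h, gArcsin_zero] at hSx
    exact hx.1.ne hSx
  · rintro h
    rw [h, gArcsin_one] at hSx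
    exact hx.2.ne' hSx

lemma one_sub_rpow_pos (hS : IsGSin p q S) (hp : 1 < p) (hq : 1 ≤ q) {x : ℝ}
    (hx : x ∈ Ioo 0 (gPi p q / 2)) : 0 < 1 - S x ^ q :=
  have hSx := hS.mem_Ioo hp hq hx
  sub_pos.2 (Real.rpow_lt_one hSx.1.le hSx.2 (by linarith))

end IsGSin

namespace IsGCos

variable {p q : ℝ} {S C : ℝ → ℝ}

lemma continuousOn (hC : IsGCos p q S C) : ContinuousOn S (Icc 0 (gPi p q / 2)) :=
  fun x hx => (hC x hx).continuousWithinAt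

lemma hasDerivAt (hC : IsGCos p q S C) {x : ℝ} (hx : x ∈ Ioo 0 (gPi p q / 2)) :
    HasDerivAt S (C x) x :=
  (hC x (Ioo_subset_Icc_self hx)).hasDerivAt (Icc_mem_nhds hx.1 hx.2)

lemma eq_one_sub_rpow (hC : IsGCos p q S C) (hS : IsGSin p q S) (hp : 1 < p) (hq : 1 ≤ q)
    {x : ℝ} (hx : x ∈ Ioo 0 (gPi p q / 2)) : C x = (1 - S x ^ q) ^ (1 / p) := by
  have hSx := hS.mem_Ioo hp hq hx
  have hbase := hS.one_sub_rpow_pos hp hq hx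
  have hid : gArcsin p q ∘ S =ᶠ[𝓝 x] id := by
    filter_upwards [Icc_mem_nhds hx.1 hx.2] with u hu
    exact (hS.mem_Icc_and_gArcsin_apply hp hq hu).2
  have hchain : (1 - S x ^ q) ^ (-(1 / p)) * C x = 1 :=
    ((hasDerivAt_gArcsin hp hq hSx.1.le hSx.2).comp x (hC.hasDerivAt hx)).unique
      ((hasDerivAt_id x).congr_of_eventuallyEq hid)
  rw [Real.rpow_neg hbase.le, inv_mul_eq_one₀ (by positivity)] at hchain
  exact hchain.symm

lemma pos (hC : IsGCos p q S C) (hS : IsGSin p q S) (hp : 1 < p) (hq : 1 ≤ q)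
    {x : ℝ} (hx : x ∈ Ioo 0 (gPi p q / 2)) : 0 < C x := by
  rw [hC.eq_one_sub_rpow hS hp hq hx]
  exact Real.rpow_pos_of_pos (hS.one_sub_rpow_pos hp hq hx) _

lemma rpow_mul_natCast_add_one (hC : IsGCos p q S C) (hS : IsGSin p q S) (hp : 1 < p)
    (hq : 1 ≤ q) (n : ℕ) {x : ℝ} (hx : x ∈ Ioo 0 (gPi p q / 2)) :
    C x ^ (p * n + 1) = (1 - S x ^ q) ^ n * C x := by
  have hbase := hS.one_sub_rpow_pos hp hq hx
  have hexp : 1 / p * (p * n + 1) = n + 1 / p := by field_simp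
  rw [hC.eq_one_sub_rpow hS hp hq hx, ← Real.rpow_mul hbase.le, hexp, Real.rpow_add hbase,
    Real.rpow_natCast]

end IsGCos

noncomputable def betaPrimitive (q k : ℝ) (n : ℕ) (s : ℝ) : ℝ :=
  ∑ m ∈ Finset.range (n + 1),
    ((-1 : ℝ) ^ m / (k + 1 + q * (m : ℝ))) * (n.choose m : ℝ) * s ^ (k + 1 + q * (m : ℝ))

section BetaPrimitive

variable {q k : ℝ}

lemma add_one_add_mul_natCast_pos (hk : -1 < k) (hq : 0 ≤ q) (m : ℕ) : 0 < k + 1 + q * m := by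
  have : 0 ≤ q * m := by positivity
  linarith

lemma betaPrimitive_zero (hk : -1 < k) (hq : 0 ≤ q) (n : ℕ) : betaPrimitive q k n 0 = 0 :=
  Finset.sum_eq_zero fun m _ => by
    rw [Real.zero_rpow (add_one_add_mul_natCast_pos hk hq m).ne', mul_zero]

lemma continuous_betaPrimitive (hk : -1 < k) (hq : 0 ≤ q) (n : ℕ) :
    Continuous (betaPrimitive q k n) :=
  continuous_finsetSum _ fun m _ =>
    continuous_const.mul (Real.continuous_rpow_const (add_one_add_mul_natCast_pos hk hq m).le)

lemma hasDerivAt_betaPrimitive (hk : -1 < k) (hq : 0 ≤ q) (n : ℕ) {s : ℝ} (hs : 0 < s) :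
    HasDerivAt (betaPrimitive q k n) (s ^ k * (1 - s ^ q) ^ n) s := by
  have hterm : ∀ m ∈ Finset.range (n + 1),
      HasDerivAt (fun s => ((-1 : ℝ) ^ m / (k + 1 + q * m)) * n.choose m * s ^ (k + 1 + q * m))
        (((-1 : ℝ) ^ m / (k + 1 + q * m)) * n.choose m *
          ((k + 1 + q * m) * s ^ (k + 1 + q * m - 1))) s :=
    fun m _ => (Real.hasDerivAt_rpow_const (Or.inl hs.ne')).const_mul _
  refine (HasDerivAt.fun_sum hterm).congr_deriv ?_
  rw [sub_eq_neg_add, add_pow, Finset.mul_sum]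
  refine Finset.sum_congr rfl fun m _ => ?_
  have he := (add_one_add_mul_natCast_pos hk hq m).ne'
  rw [show k + 1 + q * m - 1 = k + q * m by ring, Real.rpow_add hs, Real.rpow_mul hs.le,
    Real.rpow_natCast, neg_pow]
  field_simp
  ring

end BetaPrimitive

lemma hasDerivAt_betaPrimitive_comp_gSin {p q k : ℝ} {S C : ℝ → ℝ} (hp : 1 < p)
    (hq : 1 ≤ q) (hk : -1 < k) (hS : IsGSin p q S) (hC : IsGCos p q S C) (n : ℕ) {x : ℝ}
    (hx : x ∈ Ioo 0 (gPi p q / 2)) :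
    HasDerivAt (betaPrimitive q k n ∘ S) (S x ^ k * C x ^ (p * n + 1)) x := by
  have hSx := hS.mem_Ioo hp hq hx
  have := (hasDerivAt_betaPrimitive (q := q) hk (by linarith) n hSx.1).comp x (hC.hasDerivAt hx)
  rwa [hC.rpow_mul_natCast_add_one hS hp hq n hx, ← mul_assoc]

/-- Remark 3.2: for `k > -1` and `n = 0,1,2,…`,
`∫₀ˣ sin_{p,q}ᵏ t · cos_{p,q}^{pn+1} t dt
  = ∑_{m=0}ⁿ ((-1)ᵐ/(k+1+qm)) C(n,m) sin_{p,q}^{k+1+qm} x`. -/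
theorem stmt_5 (p q k : ℝ) (n : ℕ) (x : ℝ) (hp : 1 < p) (hq : 1 < q) (hk : -1 < k)
    (S C : ℝ → ℝ) (hS : IsGSin p q S) (hC : IsGCos p q S C)
    (hx : x ∈ Icc (0:ℝ) (gPi p q / 2)) :
    ∫ t in (0:ℝ)..x, S t ^ k * C t ^ (p * (n : ℝ) + 1) =
      ∑ m ∈ Finset.range (n + 1),
        ((-1 : ℝ) ^ m / (k + 1 + q * (m : ℝ))) * (n.choose m : ℝ) *
          S x ^ (k + 1 + q * (m : ℝ)) := by
  obtain ⟨hx0, hxπ⟩ := hx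
  have hsub : Ioo 0 x ⊆ Ioo 0 (gPi p q / 2) := Ioo_subset_Ioo_right hxπ
  have hcont : ContinuousOn (betaPrimitive q k n ∘ S) (Icc 0 x) :=
    (continuous_betaPrimitive hk (by linarith) n).comp_continuousOn
      (hC.continuousOn.mono (Icc_subset_Icc_right hxπ))
  have hderiv (t : ℝ) (ht : t ∈ Ioo 0 x) :=
    hasDerivAt_betaPrimitive_comp_gSin hp hq.le hk hS hC n (hsub ht)
  have hnonneg (t : ℝ) (ht : t ∈ Ioo 0 x) : 0 ≤ S t ^ k * C t ^ (p * n + 1) :=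
    mul_nonneg (Real.rpow_nonneg (hS.mem_Ioo hp hq.le (hsub ht)).1.le _)
      (Real.rpow_nonneg (hC.pos hS hp hq.le (hsub ht)).le _)
  have hint := (intervalIntegrable_iff_integrableOn_Ioc_of_le hx0).2
    (intervalIntegral.integrableOn_deriv_of_nonneg hcont hderiv hnonneg)
  rw [intervalIntegral.integral_eq_sub_of_hasDerivAt_of_le hx0 hcont hderiv hint,
    Function.comp_apply, Function.comp_apply, hS.apply_zero, betaPrimitive_zero hk (by linarith),
    sub_zero, betaPrimitive]
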